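/- arXiv:1902.01310 — 2 statements merged into one kernel-verified Lean document; each statement's English description precedes it below -/
import Mathlib

section
/- Let E and Ê be real Banach spaces (the fine and coarse discretization spaces). Let T : E →L[ℝ] E, T̂ : Ê →L[ℝ] Ê, and R : E →L[ℝ] Ê be continuous linear maps, let f : E → E and f̂ : Ê → Ê be maps, and let ê : E → Ê be a map such that the Full Approximation Scheme relation f̂(ê(u) + R u) - T̂(ê(u)) - f̂(R u) + R(f(u) - T u) = 0 holds for all u ∈ E. Fix u₀ ∈ E; suppose ê is Fréchet differentiable at u₀, f is Fréchet differentiable at u₀, and f̂ is Fréchet differentiable at both ê(u₀) + R u₀ and R u₀. Then [f̂'(ê(u₀) + R u₀) - T̂] ∘ ê'(u₀) = -(f̂'(ê(u₀) + R u₀) - f̂'(R u₀)) ∘ R - R ∘ (f'(u₀) - T). -/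
open ContinuousLinearMap

section FASResidual

variable {𝕜 E F : Type*} [NontriviallyNormedField 𝕜]
  [NormedAddCommGroup E] [NormedSpace 𝕜 E] [NormedAddCommGroup F] [NormedSpace 𝕜 F]

theorem hasFDerivAt_fas_residual {T : E →L[𝕜] E} {That : F →L[𝕜] F} {R : E →L[𝕜] F}
    {f : E → E} {fhat : F → F} {ehat : E → F} {u₀ : E} {ehat' : E →L[𝕜] F} {f' : E →L[𝕜] E}
    {B C : F →L[𝕜] F} (hehat : HasFDerivAt ehat ehat' u₀) (hf : HasFDerivAt f f' u₀)
    (hB : HasFDerivAt fhat B (ehat u₀ + R u₀)) (hC : HasFDerivAt fhat C (R u₀)) :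
    HasFDerivAt (fun u => fhat (ehat u + R u) - That (ehat u) - fhat (R u) + R (f u - T u))
      (B.comp (ehat' + R) - That.comp ehat' - C.comp R + R.comp (f' - T)) u₀ :=
  (((hB.comp u₀ (hehat.add R.hasFDerivAt)).sub (That.hasFDerivAt.comp u₀ hehat)).sub
    (hC.comp u₀ R.hasFDerivAt)).add (R.hasFDerivAt.comp u₀ (hf.sub T.hasFDerivAt))

theorem HasFDerivAt.eq_zero_of_forall_eq_zero {g : E → F} {D : E →L[𝕜] F} {u₀ : E}
    (hg : HasFDerivAt g D u₀) (hzero : ∀ u, g u = 0) : D = 0 :=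
  (funext hzero ▸ hg).unique (hasFDerivAt_const 0 u₀)

theorem comp_eq_of_fas_derivative_eq_zero {T : E →L[𝕜] E} {That : F →L[𝕜] F}
    {R : E →L[𝕜] F} {ehat' : E →L[𝕜] F} {f' : E →L[𝕜] E} {B C : F →L[𝕜] F}
    (hD : B.comp (ehat' + R) - That.comp ehat' - C.comp R + R.comp (f' - T) = 0) :
    (B - That).comp ehat' = -((B - C).comp R) - R.comp (f' - T) := by
  rw [← sub_eq_zero, ← hD, comp_add, sub_comp, sub_comp]
  abel

end FASResidual

theorem fas_jacobian_relation_general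
    (E Ehat : Type*) [NormedAddCommGroup E] [NormedSpace ℝ E]
    [NormedAddCommGroup Ehat] [NormedSpace ℝ Ehat]
    (T : E →L[ℝ] E) (That : Ehat →L[ℝ] Ehat) (R : E →L[ℝ] Ehat)
    (f : E → E) (fhat : Ehat → Ehat) (ehat : E → Ehat)
    (hFAS : ∀ u : E,
      fhat (ehat u + R u) - That (ehat u) - fhat (R u) + R (f u - T u) = 0)
    (u₀ : E) (ehat' : E →L[ℝ] Ehat) (f' : E →L[ℝ] E) (B C : Ehat →L[ℝ] Ehat)
    (hehat : HasFDerivAt ehat ehat' u₀)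
    (hf : HasFDerivAt f f' u₀)
    (hB : HasFDerivAt fhat B (ehat u₀ + R u₀))
    (hC : HasFDerivAt fhat C (R u₀)) :
    (B - That).comp ehat' = -((B - C).comp R) - R.comp (f' - T) :=
  comp_eq_of_fas_derivative_eq_zero <|
    (hasFDerivAt_fas_residual hehat hf hB hC).eq_zero_of_forall_eq_zero hFAS

/-- Differentiating the Full Approximation Scheme relation
`fhat(ehat(u) + R u) - That(ehat(u)) - fhat(R u) + R (f(u) - T u) = 0` at `u₀`
gives
`[fhat'(ehat(u₀) + R u₀) - That] ∘ ehat'(u₀)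
  = -(fhat'(ehat(u₀) + R u₀) - fhat'(R u₀)) ∘ R - R ∘ (f'(u₀) - T)`,
where `E` is the fine space and `Ehat` the coarse space. -/
theorem fas_jacobian_relation
    (E Ehat : Type*) [NormedAddCommGroup E] [NormedSpace ℝ E] [CompleteSpace E]
    [NormedAddCommGroup Ehat] [NormedSpace ℝ Ehat] [CompleteSpace Ehat]
    (T : E →L[ℝ] E) (That : Ehat →L[ℝ] Ehat) (R : E →L[ℝ] Ehat)
    (f : E → E) (fhat : Ehat → Ehat) (ehat : E → Ehat)
    (hFAS : ∀ u : E,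
      fhat (ehat u + R u) - That (ehat u) - fhat (R u) + R (f u - T u) = 0)
    (u₀ : E) (ehat' : E →L[ℝ] Ehat) (f' : E →L[ℝ] E) (B C : Ehat →L[ℝ] Ehat)
    (hehat : HasFDerivAt ehat ehat' u₀)
    (hf : HasFDerivAt f f' u₀)
    (hB : HasFDerivAt fhat B (ehat u₀ + R u₀))
    (hC : HasFDerivAt fhat C (R u₀)) :
    (B - That).comp ehat' = -((B - C).comp R) - R.comp (f' - T) :=
  fas_jacobian_relation_general E Ehat T That R f fhat ehat hFAS u₀ ehat' f' B C hehat hf hB hC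
end

section
/- Let E be a real Banach space, let T : E →L[ℝ] E be a continuous linear map, and let f : E → E and w : E → E be maps such that f(w(u)) = T u for all u ∈ E. Define g : E → E by g(u) = u - w(u). Fix u₀ ∈ E with g(u₀) = 0, suppose w is Fréchet differentiable at u₀, and suppose f is Fréchet differentiable at u₀ with derivative equal to a continuous linear equivalence A : E ≃L[ℝ] E. Then g is Fréchet differentiable at u₀ with g'(u₀) = I - A⁻¹ ∘ T; that is, at a root of g the Jacobian of the SNK preconditioned residual coincides with the additive-Schwarz preconditioned Jacobian I - [f'(u₀)]⁻¹ ∘ T of the NKS linearization. -/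
/-!
Differentiating `f ∘ w = T` at `u₀` by the chain rule gives `f'(w u₀) ∘ w'(u₀) = T`. At a root of
`g` we have `w u₀ = u₀`, so `f'(w u₀) = A` is invertible and `w'(u₀) = A⁻¹ ∘ T`; hence
`g'(u₀) = I - A⁻¹ ∘ T`.
-/

section

variable {𝕜 : Type*} [NontriviallyNormedField 𝕜]
  {E F G : Type*} [NormedAddCommGroup E] [NormedSpace 𝕜 E] [NormedAddCommGroup F] [NormedSpace 𝕜 F]
  [NormedAddCommGroup G] [NormedSpace 𝕜 G]

theorem HasFDerivAt.of_comp_eq_continuousLinearMap {f : F → G} {w : E → F} {T : E →L[𝕜] G}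
    {A : F ≃L[𝕜] G} {u₀ : E} (hfw : ∀ u, f (w u) = T u) (hf : HasFDerivAt f (A : F →L[𝕜] G) (w u₀))
    (hw : DifferentiableAt 𝕜 w u₀) :
    HasFDerivAt w ((A.symm : G →L[𝕜] F).comp T) u₀ := by
  have hchain : HasFDerivAt (f ∘ w) ((A : F →L[𝕜] G).comp (fderiv 𝕜 w u₀)) u₀ :=
    hf.comp u₀ hw.hasFDerivAt
  have hlinear : HasFDerivAt (f ∘ w) T u₀ := by
    simpa only [show f ∘ w = T from funext hfw] using T.hasFDerivAt
  have hAW : (A : F →L[𝕜] G).comp (fderiv 𝕜 w u₀) = T := hchain.unique hlinear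
  rw [← hAW, ← ContinuousLinearMap.comp_assoc, ContinuousLinearEquiv.coe_symm_comp_coe,
    ContinuousLinearMap.id_comp]
  exact hw.hasFDerivAt

end

theorem snk_jacobian_at_root_general
    (E : Type*) [NormedAddCommGroup E] [NormedSpace ℝ E]
    (T : E →L[ℝ] E) (f w : E → E)
    (hfw : ∀ u : E, f (w u) = T u)
    (g : E → E) (hg : ∀ u : E, g u = u - w u)
    (u₀ : E) (hroot : g u₀ = 0)
    (A : E ≃L[ℝ] E)
    (hw : DifferentiableAt ℝ w u₀)
    (hf : HasFDerivAt f (A : E →L[ℝ] E) u₀) :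
    HasFDerivAt g
      (ContinuousLinearMap.id ℝ E - (A.symm : E →L[ℝ] E).comp T) u₀ := by
  have hfixed : w u₀ = u₀ := (sub_eq_zero.mp ((hg u₀).symm.trans hroot)).symm
  have hw' : HasFDerivAt w ((A.symm : E →L[ℝ] E).comp T) u₀ :=
    .of_comp_eq_continuousLinearMap hfw (hfixed.symm ▸ hf) hw
  rw [show g = fun u => u - w u from funext hg]
  exact (hasFDerivAt_id u₀).sub hw'

/-- At a root `u₀` of the SNK residual `g(u) = u - w(u)` (where
`f (w u) = T u` for all `u`), if `w` is differentiable at `u₀` and `f` is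
differentiable at `u₀` with derivative a continuous linear equivalence `A`,
then `g` is differentiable at `u₀` with derivative `I - A⁻¹ ∘ T`, the
additive-Schwarz preconditioned Jacobian of the NKS linearization. -/
theorem snk_jacobian_at_root
    (E : Type*) [NormedAddCommGroup E] [NormedSpace ℝ E] [CompleteSpace E]
    (T : E →L[ℝ] E) (f w : E → E)
    (hfw : ∀ u : E, f (w u) = T u)
    (g : E → E) (hg : ∀ u : E, g u = u - w u)
    (u₀ : E) (hroot : g u₀ = 0)
    (A : E ≃L[ℝ] E)
    (hw : DifferentiableAt ℝ w u₀)
    (hf : HasFDerivAt f (A : E →L[ℝ] E) u₀) :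
    HasFDerivAt g
      (ContinuousLinearMap.id ℝ E - (A.symm : E →L[ℝ] E).comp T) u₀ :=
  snk_jacobian_at_root_general E T f w hfw g hg u₀ hroot A hw hf
end
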